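/- Let C ⊆ ℝ² be open and convex, and let f : C → ℝ be convex and Lipschitz with constant L. Let A ⊆ ℝ, let g : A → ℝ be a bounded function with (x, g(x)) ∈ C for every x ∈ A, and suppose the function x ↦ f(x, g(x)) is bounded on A. Let y, y' ∈ ℝ with y ≠ y', and suppose that for every x ∈ A there exist p_x, p'_x ∈ ℝ such that (p_x, y) ∈ ∂f(x, g(x)) and (p'_x, y') ∈ ∂f(x, g(x)). Then g (restricted to A) extends to a Lipschitz DC function on ℝ, i.e., there exist convex Lipschitz functions c₁, c₂ on ℝ such that g(x) = c₁(x) − c₂(x) for every x ∈ A (up to the factor 1/(y' − y): concretely, g = (ω' − ω)/(y' − y) on A, where ω(x) = f(x,g(x)) − y·g(x) and ω'(x) = f(x,g(x)) − y'·g(x) each extend to Lipschitz convex functions on ℝ). -/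

import Mathlib

/-!
Write `ω_y(x) = f(x, g(x)) - y g(x)`. If `(p_x, y) ∈ ∂f(x, g(x))`, testing the subgradient
inequality at the graph point `(b, g(b))` gives `ω_y(x) + p_x (b - x) ≤ ω_y(b)` for `x, b ∈ A`,
and `|p_x| ≤ L` because subgradients of an `L`-Lipschitz function on an open set have norm at
most `L`. Hence the supremum of these supporting lines is a convex `L`-Lipschitz function on `ℝ`
agreeing with `ω_y` on `A`. Doing this for `y` and `y'` and using
`ω_y - ω_{y'} = (y' - y) g` exhibits `g` on `A` as a difference of convex Lipschitz functions.
-/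

open Set Filter Topology
open scoped RealInnerProductSpace

noncomputable section

/-- The subdifferential of `f` at `x` relative to the set `C`. -/
def subdiff (C : Set (EuclideanSpace ℝ (Fin 2)))
    (f : EuclideanSpace ℝ (Fin 2) → ℝ) (x : EuclideanSpace ℝ (Fin 2)) :
    Set (EuclideanSpace ℝ (Fin 2)) :=
  {v | ∀ y ∈ C, f x + ⟪v, y - x⟫ ≤ f y}

/-- The point `(a, b)` of `ℝ²`. -/
def mk2 (a b : ℝ) : EuclideanSpace ℝ (Fin 2) :=
  (WithLp.equiv 2 (Fin 2 → ℝ)).symm ![a, b]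

open scoped NNReal

/-- A subgradient at an interior point can be tested in its own direction `w = z + t • v`,
which gives `t ‖v‖² ≤ L t ‖v‖`. -/
lemma LipschitzOnWith.norm_le_of_forall_add_inner_le {E : Type*} [NormedAddCommGroup E]
    [InnerProductSpace ℝ E] {C : Set E} {f : E → ℝ} {L : ℝ≥0} {z v : E}
    (hlip : LipschitzOnWith L f C) (hC : C ∈ 𝓝 z) (hv : ∀ w ∈ C, f z + ⟪v, w - z⟫ ≤ f w) :
    ‖v‖ ≤ L := by
  have hline : ∀ᶠ t : ℝ in 𝓝[>] 0, z + t • v ∈ C :=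
    nhdsWithin_le_nhds <| (Continuous.tendsto (by fun_prop) 0).eventually
      (by simpa using hC)
  obtain ⟨t, htC, ht⟩ := (hline.and self_mem_nhdsWithin).exists
  have hinner : t * ‖v‖ ^ 2 ≤ f (z + t • v) - f z := by
    have := hv _ htC
    rw [add_sub_cancel_left, real_inner_smul_right, real_inner_self_eq_norm_sq] at this
    linarith
  have hdiff : f (z + t • v) - f z ≤ L * (t * ‖v‖) := by
    have := hlip.dist_le_mul _ htC z (mem_of_mem_nhds hC)
    rw [Real.dist_eq, dist_eq_norm, add_sub_cancel_left, norm_smul, Real.norm_of_nonneg ht.le]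
      at this
    exact (le_abs_self _).trans this
  by_contra! hlt
  have htv : 0 < t * ‖v‖ := mul_pos ht (L.coe_nonneg.trans_lt hlt)
  have : (L : ℝ) * (t * ‖v‖) < t * ‖v‖ ^ 2 :=
    calc (L : ℝ) * (t * ‖v‖) < ‖v‖ * (t * ‖v‖) := mul_lt_mul_of_pos_right hlt htv
      _ = t * ‖v‖ ^ 2 := by ring
  linarith

section CiSup

variable {ι α : Type*} {F : ι → α → ℝ}

lemma bddAbove_range_of_lipschitzWith [PseudoMetricSpace α] {K : ℝ≥0}
    (hF : ∀ i, LipschitzWith K (F i)) {x₀ : α} (h₀ : BddAbove (range fun i => F i x₀))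
    (x : α) : BddAbove (range fun i => F i x) := by
  obtain ⟨M, hM⟩ := h₀
  refine ⟨M + K * dist x x₀, forall_mem_range.2 fun i => ?_⟩
  linarith [(hF i).le_add_mul x x₀, hM (mem_range_self i)]

lemma LipschitzWith.ciSup [Nonempty ι] [PseudoMetricSpace α] {K : ℝ≥0}
    (hF : ∀ i, LipschitzWith K (F i)) (hbdd : ∀ x, BddAbove (range fun i => F i x)) :
    LipschitzWith K fun x => ⨆ i, F i x :=
  LipschitzWith.of_le_add_mul K fun x x' => ciSup_le fun i =>
    ((hF i).le_add_mul x x').trans (by gcongr; exact le_ciSup (hbdd x') i)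

lemma ConvexOn.ciSup [Nonempty ι] [AddCommMonoid α] [Module ℝ α] {s : Set α} (hs : Convex ℝ s)
    (hF : ∀ i, ConvexOn ℝ s (F i)) (hbdd : ∀ x, BddAbove (range fun i => F i x)) :
    ConvexOn ℝ s fun x => ⨆ i, F i x :=
  ⟨hs, fun x hx x' hx' a b ha hb hab => ciSup_le fun i =>
    ((hF i).2 hx hx' ha hb hab).trans <| by
      simp only [smul_eq_mul]
      gcongr <;> exact le_ciSup (hbdd _) i⟩

end CiSup

lemma exists_convexOn_lipschitzWith_eqOn_of_affine_minorants {A : Set ℝ} {ω q : ℝ → ℝ}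
    {K : ℝ≥0} (hq : ∀ a ∈ A, |q a| ≤ K) (hmin : ∀ a ∈ A, ∀ b ∈ A, ω a + q a * (b - a) ≤ ω b) :
    ∃ c : ℝ → ℝ, ConvexOn ℝ univ c ∧ LipschitzWith K c ∧ EqOn c ω A := by
  rcases A.eq_empty_or_nonempty with rfl | ⟨x₀, hx₀⟩
  · exact ⟨0, convexOn_const 0 convex_univ, LipschitzWith.const' 0, eqOn_empty _ _⟩
  have : Nonempty A := ⟨⟨x₀, hx₀⟩⟩
  set F : A → ℝ → ℝ := fun a x => ω a + q a * (x - a) with hF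
  have hlip (a : A) : LipschitzWith K (F a) := LipschitzWith.of_dist_le_mul fun x x' => by
    rw [Real.dist_eq, Real.dist_eq, show F a x - F a x' = q a * (x - x') by ring, abs_mul]
    gcongr
    exact hq a a.2
  have hconv (a : A) : ConvexOn ℝ univ (F a) :=
    ⟨convex_univ, fun x _ x' _ s t _ _ hst => le_of_eq <| by
      simp only [hF, smul_eq_mul]
      linear_combination (q a * a - ω a) * hst⟩
  have hbdd := bddAbove_range_of_lipschitzWith hlip (x₀ := x₀)
    ⟨ω x₀, forall_mem_range.2 fun a => hmin a a.2 x₀ hx₀⟩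
  refine ⟨fun x => ⨆ a, F a x, .ciSup convex_univ hconv hbdd, .ciSup hlip hbdd, fun b hb => ?_⟩
  refine le_antisymm (ciSup_le fun a => hmin a a.2 b hb) ?_
  simpa [hF] using le_ciSup (hbdd b) ⟨b, hb⟩

lemma inner_mk2_mk2 (a b c d : ℝ) : ⟪mk2 a b, mk2 c d⟫ = a * c + b * d := by
  simp [mk2, PiLp.inner_apply, Fin.sum_univ_two, mul_comm]

lemma mk2_sub_mk2 (a b c d : ℝ) : mk2 a b - mk2 c d = mk2 (a - c) (b - d) := by
  ext i; fin_cases i <;> rfl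

lemma abs_le_norm_mk2 (a b : ℝ) : |a| ≤ ‖mk2 a b‖ :=
  PiLp.norm_apply_le (mk2 a b) 0

def graphTilt (f : EuclideanSpace ℝ (Fin 2) → ℝ) (g : ℝ → ℝ) (y x : ℝ) : ℝ :=
  f (mk2 x (g x)) - y * g x

lemma graphTilt_sub_graphTilt (f : EuclideanSpace ℝ (Fin 2) → ℝ) (g : ℝ → ℝ) (y y' x : ℝ) :
    graphTilt f g y x - graphTilt f g y' x = (y' - y) * g x := by
  unfold graphTilt; ring

lemma graphTilt_add_mul_sub_le {C : Set (EuclideanSpace ℝ (Fin 2))}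
    {f : EuclideanSpace ℝ (Fin 2) → ℝ} {g : ℝ → ℝ} {q y a b : ℝ}
    (hq : mk2 q y ∈ subdiff C f (mk2 a (g a))) (hb : mk2 b (g b) ∈ C) :
    graphTilt f g y a + q * (b - a) ≤ graphTilt f g y b := by
  have := hq _ hb
  rw [mk2_sub_mk2, inner_mk2_mk2] at this
  unfold graphTilt
  linarith

lemma exists_convexOn_lipschitzWith_eqOn_graphTilt {C : Set (EuclideanSpace ℝ (Fin 2))}
    (hC : IsOpen C) {f : EuclideanSpace ℝ (Fin 2) → ℝ} {L : ℝ≥0} (hlip : LipschitzOnWith L f C)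
    {A : Set ℝ} {g : ℝ → ℝ} (hgC : ∀ x ∈ A, mk2 x (g x) ∈ C) {y : ℝ} {p : ℝ → ℝ}
    (hp : ∀ x ∈ A, mk2 (p x) y ∈ subdiff C f (mk2 x (g x))) :
    ∃ c : ℝ → ℝ, ConvexOn ℝ univ c ∧ LipschitzWith L c ∧ EqOn c (graphTilt f g y) A := by
  refine exists_convexOn_lipschitzWith_eqOn_of_affine_minorants (fun a ha => ?_)
    fun a ha b hb => graphTilt_add_mul_sub_le (hp a ha) (hgC b hb)
  exact (abs_le_norm_mk2 _ y).trans <|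
    hlip.norm_le_of_forall_add_inner_le (hC.mem_nhds (hgC a ha)) (hp a ha)

lemma exists_convexOn_lipschitzWith_sub_eq_of_mul_eq {A : Set ℝ} {g u v : ℝ → ℝ} {d : ℝ}
    (hd : 0 < d) (hu : ConvexOn ℝ univ u) (hv : ConvexOn ℝ univ v) {Ku Kv : ℝ≥0}
    (huL : LipschitzWith Ku u) (hvL : LipschitzWith Kv v) (huv : ∀ x ∈ A, u x - v x = d * g x) :
    ∃ c₁ c₂ : ℝ → ℝ,
      ConvexOn ℝ univ c₁ ∧ ConvexOn ℝ univ c₂ ∧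
      (∃ K₁ : NNReal, LipschitzWith K₁ c₁) ∧ (∃ K₂ : NNReal, LipschitzWith K₂ c₂) ∧
      ∀ x ∈ A, g x = c₁ x - c₂ x := by
  refine ⟨fun x => d⁻¹ • u x, fun x => d⁻¹ • v x, hu.smul (by positivity),
    hv.smul (by positivity), ⟨_, (lipschitzWith_smul d⁻¹).comp huL⟩,
    ⟨_, (lipschitzWith_smul d⁻¹).comp hvL⟩, fun x hx => ?_⟩
  simp only [smul_eq_mul, ← mul_sub, huv x hx]
  field_simp

theorem restriction_extends_to_lipschitz_DC_general
    (C : Set (EuclideanSpace ℝ (Fin 2))) (hCopen : IsOpen C)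
    (f : EuclideanSpace ℝ (Fin 2) → ℝ) (L : NNReal)
    (hlip : LipschitzOnWith L f C)
    (A : Set ℝ) (g : ℝ → ℝ)
    (hgC : ∀ x ∈ A, mk2 x (g x) ∈ C)
    (y y' : ℝ) (hyy' : y ≠ y') (p p' : ℝ → ℝ)
    (hp : ∀ x ∈ A, mk2 (p x) y ∈ subdiff C f (mk2 x (g x)))
    (hp' : ∀ x ∈ A, mk2 (p' x) y' ∈ subdiff C f (mk2 x (g x))) :
    ∃ c₁ c₂ : ℝ → ℝ,
      ConvexOn ℝ univ c₁ ∧ ConvexOn ℝ univ c₂ ∧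
      (∃ K₁ : NNReal, LipschitzWith K₁ c₁) ∧ (∃ K₂ : NNReal, LipschitzWith K₂ c₂) ∧
      ∀ x ∈ A, g x = c₁ x - c₂ x := by
  obtain ⟨c, hc, hcL, hcA⟩ := exists_convexOn_lipschitzWith_eqOn_graphTilt hCopen hlip hgC hp
  obtain ⟨c', hc', hc'L, hc'A⟩ := exists_convexOn_lipschitzWith_eqOn_graphTilt hCopen hlip hgC hp'
  rcases hyy'.lt_or_gt with hlt | hgt
  · refine exists_convexOn_lipschitzWith_sub_eq_of_mul_eq (sub_pos.2 hlt) hc hc' hcL hc'L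
      fun x hx => ?_
    rw [hcA hx, hc'A hx, graphTilt_sub_graphTilt]
  · refine exists_convexOn_lipschitzWith_sub_eq_of_mul_eq (sub_pos.2 hgt) hc' hc hc'L hcL
      fun x hx => ?_
    rw [hcA hx, hc'A hx, graphTilt_sub_graphTilt]

/-- If `f` is convex and `L`-Lipschitz on an open convex `C ⊆ ℝ²`, `g` is bounded on
`A ⊆ ℝ` with graph in `C`, `x ↦ f(x, g(x))` is bounded on `A`, `y ≠ y'`, and for each
`x ∈ A` there are `p_x, p'_x` with `(p_x, y) ∈ ∂f(x, g(x))` and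
`(p'_x, y') ∈ ∂f(x, g(x))`, then `g` extends from `A` to a Lipschitz DC function on `ℝ`:
there are convex Lipschitz `c₁, c₂` on `ℝ` with `g = c₁ - c₂` on `A`. -/
theorem restriction_extends_to_lipschitz_DC
    (C : Set (EuclideanSpace ℝ (Fin 2))) (hCopen : IsOpen C) (hCconv : Convex ℝ C)
    (f : EuclideanSpace ℝ (Fin 2) → ℝ) (L : NNReal)
    (hconv : ConvexOn ℝ C f) (hlip : LipschitzOnWith L f C)
    (A : Set ℝ) (g : ℝ → ℝ)
    (hgbd : ∃ M : ℝ, ∀ x ∈ A, |g x| ≤ M)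
    (hgC : ∀ x ∈ A, mk2 x (g x) ∈ C)
    (hfbd : ∃ M : ℝ, ∀ x ∈ A, |f (mk2 x (g x))| ≤ M)
    (y y' : ℝ) (hyy' : y ≠ y') (p p' : ℝ → ℝ)
    (hp : ∀ x ∈ A, mk2 (p x) y ∈ subdiff C f (mk2 x (g x)))
    (hp' : ∀ x ∈ A, mk2 (p' x) y' ∈ subdiff C f (mk2 x (g x))) :
    ∃ c₁ c₂ : ℝ → ℝ,
      ConvexOn ℝ univ c₁ ∧ ConvexOn ℝ univ c₂ ∧
      (∃ K₁ : NNReal, LipschitzWith K₁ c₁) ∧ (∃ K₂ : NNReal, LipschitzWith K₂ c₂) ∧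
      ∀ x ∈ A, g x = c₁ x - c₂ x :=
  restriction_extends_to_lipschitz_DC_general C hCopen f L hlip A g hgC y y' hyy' p p' hp hp'
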